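/- Let F be a free group and for w ∈ F let |w| denote the length of the reduced word representing w. Suppose C ∈ F factors as C = v_1 · a · v_2 · a · v_3 with no cancellation, i.e., |C| = |v_1| + |a| + |v_2| + |a| + |v_3|. Then C = (v_1 a v_2 v_1⁻¹)² · (v_1 v_2⁻¹ v_3), and moreover |v_1 a v_2 v_1⁻¹| ≤ 2|C| and |v_1 v_2⁻¹ v_3| ≤ |C|. -/
import Mathlib


/-- Splitting off a square: if `C = v₁ a v₂ a v₃` in a free group with no cancellation
(i.e. `|C| = |v₁| + |a| + |v₂| + |a| + |v₃|`), then `C = (v₁ a v₂ v₁⁻¹)² (v₁ v₂⁻¹ v₃)`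
with `|v₁ a v₂ v₁⁻¹| ≤ 2|C|` and `|v₁ v₂⁻¹ v₃| ≤ |C|`. -/
theorem stmt_8 {α : Type*} [DecidableEq α] (C v₁ v₂ v₃ a : FreeGroup α)
    (hfac : C = v₁ * a * v₂ * a * v₃)
    (hnc : C.norm = v₁.norm + a.norm + v₂.norm + a.norm + v₃.norm) :
    C = (v₁ * a * v₂ * v₁⁻¹) ^ 2 * (v₁ * v₂⁻¹ * v₃) ∧
      (v₁ * a * v₂ * v₁⁻¹).norm ≤ 2 * C.norm ∧
      (v₁ * v₂⁻¹ * v₃).norm ≤ C.norm := by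
  refine ⟨by subst hfac; simp [sq, mul_assoc], ?_, ?_⟩
  · have h1 : (v₁ * a * v₂ * v₁⁻¹).norm ≤ v₁.norm + a.norm + v₂.norm + v₁.norm := by
      calc (v₁ * a * v₂ * v₁⁻¹).norm ≤ (v₁ * a * v₂).norm + v₁⁻¹.norm :=
            FreeGroup.norm_mul_le _ _
        _ ≤ (v₁ * a).norm + v₂.norm + v₁⁻¹.norm := by
            gcongr; exact FreeGroup.norm_mul_le _ _
        _ ≤ v₁.norm + a.norm + v₂.norm + v₁⁻¹.norm := by
            gcongr; exact FreeGroup.norm_mul_le _ _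
        _ = v₁.norm + a.norm + v₂.norm + v₁.norm := by rw [FreeGroup.norm_inv_eq]
    omega
  · have h1 : (v₁ * v₂⁻¹ * v₃).norm ≤ v₁.norm + v₂.norm + v₃.norm := by
      calc (v₁ * v₂⁻¹ * v₃).norm ≤ (v₁ * v₂⁻¹).norm + v₃.norm := FreeGroup.norm_mul_le _ _
        _ ≤ v₁.norm + v₂⁻¹.norm + v₃.norm := by gcongr; exact FreeGroup.norm_mul_le _ _
        _ = v₁.norm + v₂.norm + v₃.norm := by rw [FreeGroup.norm_inv_eq]
    omega
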